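/- arXiv:1407.7092 — 3 statements merged into one kernel-verified Lean document; each statement's English description precedes it below -/
import Mathlib

section
/- For any graph G and any connected graph F with |V(F)| ≥ σ(G), the Ramsey number satisfies R(F,G) ≥ (χ(G)−1)(|V(F)|−1) + σ(G). -/
open SimpleGraph Finset

/-- `F` is contained in `G` as a (not necessarily induced) subgraph. -/
def ContainsCopy {α β : Type*} (F : SimpleGraph α) (G : SimpleGraph β) : Prop :=
  ∃ f : α → β, Function.Injective f ∧ ∀ a b, F.Adj a b → G.Adj (f a) (f b)

/-- Every red/blue coloring of `K_N` yields a red `F` or a blue `G`. -/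
def IsRamsey {α β : Type*} (F : SimpleGraph α) (G : SimpleGraph β) (N : ℕ) : Prop :=
  ∀ R : SimpleGraph (Fin N), ContainsCopy F R ∨ ContainsCopy G Rᶜ

/-- The two color Ramsey number `R(F,G)`. -/
noncomputable def ramseyNumber {α β : Type*} (F : SimpleGraph α) (G : SimpleGraph β) : ℕ :=
  sInf {N | IsRamsey F G N}

/-- The chromatic number of `G` as a natural number. -/
noncomputable def chromNum {V : Type*} (G : SimpleGraph V) : ℕ :=
  sInf {k | G.Colorable k}

/-- `σ(G)`: the minimum size of a color class among proper colorings with `χ(G)` colors. -/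
noncomputable def sigmaG {V : Type*} [Fintype V] (G : SimpleGraph V) : ℕ :=
  sInf {m | ∃ C : G.Coloring (Fin (chromNum G)), ∃ i,
    (Finset.univ.filter (fun v => C v = i)).card = m}

/-- The independence number of `G`. -/
noncomputable def indepNum {V : Type*} [Fintype V] (G : SimpleGraph V) : ℕ :=
  sSup {m | ∃ s : Finset V, s.card = m ∧ ∀ a ∈ s, ∀ b ∈ s, ¬ G.Adj a b}

/-- `f` describes a cycle of length `m` in `R`. -/
def CycleIn {V : Type*} (R : SimpleGraph V) (m : ℕ) (f : ZMod m → V) : Prop :=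
  3 ≤ m ∧ Function.Injective f ∧ ∀ i, R.Adj (f i) (f (i + 1))

/-- `f` describes a longest cycle (of length `m`) in `R`. -/
def LongestCycle {V : Type*} (R : SimpleGraph V) (m : ℕ) (f : ZMod m → V) : Prop :=
  CycleIn R m f ∧ ∀ (m' : ℕ) (g : ZMod m' → V), CycleIn R m' g → m' ≤ m

/-- The `k`-th power of the path on `n` vertices. -/
def pathPower (n k : ℕ) : SimpleGraph (Fin n) :=
  SimpleGraph.fromRel (fun i j => (i : ℕ) < j ∧ (j : ℕ) ≤ i + k)

/-!
Burr's colouring: put the `N < (χ(G) - 1)(|F| - 1) + σ(G)` vertices into `χ(G) - 1` parts of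
size `|F| - 1` and one part of size `σ(G) - 1`, and colour an edge red iff it lies inside a part,
i.e. the blue graph is complete multipartite. A red copy of the connected graph `F` lies inside
one part, which has fewer than `|F|` vertices since `σ(G) ≤ |F|`. A blue copy of `G` induces a
proper colouring of `G` by the `χ(G)` parts, one of whose classes has fewer than `σ(G)` vertices.

Since `ramseyNumber` is an infimum over ℕ and `sInf ∅ = 0`, the bound also needs Ramsey's
theorem, in the form `R(K_s, K_t) ≤ (s + t).choose s`.
-/

lemma Fin.sum_ite_val_eq_zero {n : ℕ} (hn : 0 < n) (a b : ℕ) :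
    ∑ i : Fin n, (if (i : ℕ) = 0 then a else b) = a + (n - 1) * b := by
  obtain ⟨k, rfl⟩ := Nat.exists_eq_add_one_of_ne_zero hn.ne'
  simp [Fin.sum_univ_succ]

lemma Fintype.card_le_of_injective_of_forall_fst_eq {ι X : Type*} {V : ι → Type*} [Fintype X]
    {i : ι} [Fintype (V i)] (f : X → Σ j, V j) (hf : Function.Injective f)
    (hfi : ∀ x, (f x).1 = i) : Fintype.card X ≤ Fintype.card (V i) :=
  Fintype.card_le_of_injective (fun x => Equiv.sigmaSubtype i ⟨f x, hfi x⟩)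
    ((Equiv.injective _).comp fun _ _ h => hf (congrArg Subtype.val h))

namespace SimpleGraph

section Ramsey

variable {V : Type*} [DecidableEq V]

lemma card_le_card_filter_adj_add_card_filter_compl_adj (H : SimpleGraph V)
    [DecidableRel H.Adj] (v : V) (S : Finset V) :
    #S ≤ #(S.filter (H.Adj v)) + #(S.filter (Hᶜ.Adj v)) + 1 := by
  calc #S ≤ #(insert v (S.filter (H.Adj v) ∪ S.filter (Hᶜ.Adj v))) := by
        refine card_le_card fun x hx => ?_
        by_cases hxv : v = x
        · simp [hxv]
        · by_cases hadj : H.Adj v x <;> simp [hx, hxv, hadj]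
    _ ≤ _ := (card_insert_le _ _).trans (by grw [card_union_le])

lemma IsNClique.insert_of_subset_filter_adj {K : SimpleGraph V} [DecidableRel K.Adj] {n : ℕ}
    {v : V} {S T : Finset V} (hv : v ∈ S) (hTS : T ⊆ S.filter (K.Adj v))
    (hT : K.IsNClique n T) : insert v T ⊆ S ∧ K.IsNClique (n + 1) (insert v T) :=
  ⟨insert_subset hv (hTS.trans (filter_subset _ _)),
    hT.insert fun _ hb => (mem_filter.1 (hTS hb)).2⟩

theorem exists_isNClique_or_isNClique_compl :
    ∀ (H : SimpleGraph V) (s t : ℕ) (S : Finset V), (s + t).choose s ≤ #S →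
      ∃ T ⊆ S, H.IsNClique s T ∨ Hᶜ.IsNClique t T
  | _, 0, _, _, _ => ⟨∅, empty_subset _, Or.inl (isNClique_empty.2 rfl)⟩
  | _, _ + 1, 0, _, _ => ⟨∅, empty_subset _, Or.inr (isNClique_empty.2 rfl)⟩
  | H, s + 1, t + 1, S, hS => by
    classical
    obtain ⟨v, hv⟩ : S.Nonempty := card_pos.1 ((Nat.choose_pos (by omega)).trans_le hS)
    have hsplit := card_le_card_filter_adj_add_card_filter_compl_adj H v S
    have hpascal : (s + 1 + (t + 1)).choose (s + 1) =
        (s + (t + 1)).choose s + (t + (s + 1)).choose t := by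
      rw [@Nat.choose_symm_add t, show s + 1 + (t + 1) = s + t + 1 + 1 by omega,
        Nat.choose_succ_succ', show t + (s + 1) = s + t + 1 by omega,
        show s + (t + 1) = s + t + 1 by omega]
    by_cases hN : (s + (t + 1)).choose s ≤ #(S.filter (H.Adj v))
    · obtain ⟨T, hTS, hT | hT⟩ := exists_isNClique_or_isNClique_compl H s (t + 1) _ hN
      · obtain ⟨hsub, hcl⟩ := hT.insert_of_subset_filter_adj hv hTS
        exact ⟨_, hsub, Or.inl hcl⟩
      · exact ⟨T, hTS.trans (filter_subset _ _), Or.inr hT⟩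
    · have hM : (t + (s + 1)).choose t ≤ #(S.filter (Hᶜ.Adj v)) := by omega
      obtain ⟨T, hTS, hT | hT⟩ := exists_isNClique_or_isNClique_compl Hᶜ t (s + 1) _ hM
      · obtain ⟨hsub, hcl⟩ := hT.insert_of_subset_filter_adj hv hTS
        exact ⟨_, hsub, Or.inr hcl⟩
      · exact ⟨T, hTS.trans (filter_subset _ _), Or.inl (compl_compl H ▸ hT)⟩
termination_by _ s t => s + t

end Ramsey

variable {α β ι : Type*} {F : SimpleGraph α} {G : SimpleGraph β} {V : ι → Type*}

theorem Reachable.apply_eq_of_adj {X : Type*} {g : α → X} (hg : ∀ ⦃u v⦄, F.Adj u v → g u = g v)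
    {u v : α} (h : F.Reachable u v) : g u = g v := by
  obtain ⟨p⟩ := h
  induction p with
  | nil => rfl
  | cons hadj _ ih => exact (hg hadj).trans ih

theorem Connected.exists_card_le_of_isContained_compl_completeMultipartiteGraph [Fintype α]
    [∀ i, Fintype (V i)] (hF : F.Connected) (h : F ⊑ (completeMultipartiteGraph V)ᶜ) :
    ∃ i, Fintype.card α ≤ Fintype.card (V i) := by
  obtain ⟨f⟩ := h
  obtain ⟨a₀⟩ := hF.nonempty
  have hpart : ∀ ⦃a b⦄, F.Adj a b → (f a).1 = (f b).1 := fun a b hab => by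
    simpa using (f.toHom.map_adj hab).2
  exact ⟨(f a₀).1, Fintype.card_le_of_injective_of_forall_fst_eq f f.injective
    fun a => (hF a a₀).apply_eq_of_adj hpart⟩

theorem IsContained.exists_coloring_card_le_of_completeMultipartiteGraph [Fintype β]
    [DecidableEq ι] [∀ i, Fintype (V i)] (h : G ⊑ completeMultipartiteGraph V) :
    ∃ C : G.Coloring ι, ∀ i, #{v | C v = i} ≤ Fintype.card (V i) := by
  obtain ⟨f⟩ := h
  refine ⟨(completeMultipartiteGraph.coloring V).comp f.toHom, fun i => ?_⟩
  rw [← Fintype.card_subtype]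
  exact Fintype.card_le_of_injective_of_forall_fst_eq (fun v => f v.1)
    (f.injective.comp Subtype.val_injective) fun v => v.2

end SimpleGraph

open SimpleGraph

lemma containsCopy_iff_isContained {α β : Type*} {F : SimpleGraph α} {H : SimpleGraph β} :
    ContainsCopy F H ↔ F ⊑ H :=
  ⟨fun ⟨f, hf, hadj⟩ => ⟨⟨⟨f, hadj _ _⟩, hf⟩⟩,
    fun ⟨f⟩ => ⟨f, f.injective, fun _ _ => f.toHom.map_adj⟩⟩

section IsRamsey

variable {α β : Type*} {F : SimpleGraph α} {G : SimpleGraph β}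

theorem isRamsey_choose_card [Fintype α] [Fintype β] (F : SimpleGraph α) (G : SimpleGraph β) :
    IsRamsey F G ((Fintype.card α + Fintype.card β).choose (Fintype.card α)) := by
  intro R
  obtain ⟨T, -, hT | hT⟩ :=
    exists_isNClique_or_isNClique_compl R (Fintype.card α) (Fintype.card β) univ (by simp)
  · exact Or.inl <| containsCopy_iff_isContained.2 <| (IsContained.of_le le_top).trans <|
      not_free.1 (cliqueFree_iff_top_free.not.1 hT.not_cliqueFree)
  · exact Or.inr <| containsCopy_iff_isContained.2 <| (IsContained.of_le le_top).trans <|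
      not_free.1 (cliqueFree_iff_top_free.not.1 hT.not_cliqueFree)

theorem IsRamsey.isContained_or_isContained_compl {W : Type*} [Fintype W] {N : ℕ}
    (hR : IsRamsey F G N) (hN : N ≤ Fintype.card W) (H : SimpleGraph W) : F ⊑ H ∨ G ⊑ Hᶜ := by
  obtain ⟨e⟩ :=
    Function.Embedding.nonempty_of_card_le (by simpa using hN : Fintype.card (Fin N) ≤ _)
  refine (hR (H.comap e)).imp (fun hF => ?_) fun hG => ?_
  · exact (containsCopy_iff_isContained.1 hF).trans (Embedding.comap e H).isContained
  · exact (containsCopy_iff_isContained.1 hG).trans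
      (compl_isIndContained_compl.2 ⟨Embedding.comap e H⟩).isContained

theorem not_isRamsey_of_le_card_sigma [Fintype α] [Fintype β] {ι : Type*} [Fintype ι]
    [DecidableEq ι] (V : ι → Type*) [∀ i, Fintype (V i)] {N : ℕ} (hF : F.Connected)
    (hV : ∀ i, Fintype.card (V i) < Fintype.card α)
    (hG : ∀ C : G.Coloring ι, ∃ i, Fintype.card (V i) < #{v | C v = i})
    (hN : N ≤ Fintype.card (Σ i, V i)) : ¬ IsRamsey F G N := fun hR => by
  rcases hR.isContained_or_isContained_compl hN (completeMultipartiteGraph V)ᶜ with h | h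
  · obtain ⟨i, hi⟩ := hF.exists_card_le_of_isContained_compl_completeMultipartiteGraph h
    exact (hV i).not_ge hi
  · rw [compl_compl] at h
    obtain ⟨C, hC⟩ := h.exists_coloring_card_le_of_completeMultipartiteGraph
    obtain ⟨i, hi⟩ := hG C
    exact (hC i).not_gt hi

end IsRamsey

section ChromaticNumber

variable {β : Type*} (G : SimpleGraph β)

lemma chromNum_le {k : ℕ} (h : G.Colorable k) : chromNum G ≤ k := Nat.sInf_le h

lemma colorable_chromNum [Fintype β] : G.Colorable (chromNum G) :=
  Nat.sInf_mem (s := {k | G.Colorable k}) ⟨_, G.colorable_of_fintype⟩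

lemma SimpleGraph.Coloring.exists_eq_of_chromNum {G : SimpleGraph β}
    (C : G.Coloring (Fin (chromNum G))) (i : Fin (chromNum G)) : ∃ v, C v = i := by
  by_contra! h
  have hle := chromNum_le G (Coloring.mk (fun v => (⟨C v, h v⟩ : {j // j ≠ i}))
    fun hadj heq => C.valid hadj (congrArg Subtype.val heq)).colorable
  rw [Fintype.card_subtype_compl, Fintype.card_fin, Fintype.card_unique] at hle
  have := i.pos
  omega

lemma sigmaG_le_card [Fintype β] (C : G.Coloring (Fin (chromNum G))) (i : Fin (chromNum G)) :
    sigmaG G ≤ #{v | C v = i} :=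
  Nat.sInf_le ⟨C, i, rfl⟩

lemma sigmaG_eq_zero_of_chromNum_eq_zero [Fintype β] (h : chromNum G = 0) : sigmaG G = 0 :=
  Nat.sInf_eq_zero.2 <| Or.inr <| Set.eq_empty_of_forall_notMem fun _ ⟨_, i, _⟩ =>
    (h ▸ i.pos).false

lemma sigmaG_pos [Fintype β] (h : 0 < chromNum G) : 0 < sigmaG G := by
  obtain ⟨C₀⟩ := colorable_chromNum G
  obtain ⟨C, i, hi⟩ := Nat.sInf_mem (s := {m | ∃ C : G.Coloring (Fin (chromNum G)), ∃ i,
    #{v | C v = i} = m}) ⟨_, C₀, ⟨0, h⟩, rfl⟩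
  obtain ⟨v, hv⟩ := C.exists_eq_of_chromNum i
  rw [sigmaG, ← hi]
  exact card_pos.2 ⟨v, by simp [hv]⟩

end ChromaticNumber

theorem burr_lower_bound {α β : Type*} [Fintype α] [Fintype β]
    (F : SimpleGraph α) (G : SimpleGraph β)
    (hF : F.Connected) (h : sigmaG G ≤ Fintype.card α) :
    (chromNum G - 1) * (Fintype.card α - 1) + sigmaG G ≤ ramseyNumber F G := by
  rcases Nat.eq_zero_or_pos (chromNum G) with hχ | hχ
  · simp [hχ, sigmaG_eq_zero_of_chromNum_eq_zero G hχ]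
  have hσ := sigmaG_pos G hχ
  have hα : 0 < Fintype.card α := Fintype.card_pos_iff.2 hF.nonempty
  refine le_csInf ⟨_, isRamsey_choose_card F G⟩ fun N hR => ?_
  by_contra! hN
  refine not_isRamsey_of_le_card_sigma
    (fun i : Fin (chromNum G) => Fin (if (i : ℕ) = 0 then sigmaG G - 1 else Fintype.card α - 1))
    hF (fun i => ?_) (fun C => ⟨⟨0, hχ⟩, ?_⟩) ?_ hR
  · simp only [Fintype.card_fin]
    split_ifs <;> omega
  · have := sigmaG_le_card G C ⟨0, hχ⟩
    simp only [Fintype.card_fin, ↓reduceIte]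
    omega
  · rw [Fintype.card_sigma]
    simp only [Fintype.card_fin]
    rw [Fin.sum_ite_val_eq_zero hχ]
    omega
end

section
/- Let R be a graph, C a longest cycle in R of length c, and let w₁,…,w_Δ be vertices of R not on C, all lying in a common component of R − V(C) (in particular, pairwise connected outside C). Then the number of vertices of C that are non-neighbors (in R) of every w_j is at least (c − Δ²)/2. -/
open SimpleGraph Finset

/-!
If some `w j` is adjacent to `f i` and some `w j'` to `f (i + 1)`, then replacing the edge
`f i f (i + 1)` of the cycle by a path from `w j` to `w j'` outside the cycle gives a longer
cycle. So `i ↦ i + 1` maps the positions adjacent to some `w j` injectively into the common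
non-neighbourhood, which therefore contains at least half of the cycle.
-/

namespace CycleIn

variable {V : Type*} {R : SimpleGraph V}

theorem of_injOn_of_adj {N : ℕ} [NeZero N] {g : ℕ → V} (hN : 3 ≤ N)
    (hinj : Set.InjOn g (Set.Iio N)) (hadj : ∀ n, n + 1 < N → R.Adj (g n) (g (n + 1)))
    (hclose : R.Adj (g (N - 1)) (g 0)) :
    CycleIn R N fun t => g t.val := by
  refine ⟨hN, fun a b hab => ZMod.val_injective N (hinj a.val_lt b.val_lt hab), fun t => ?_⟩
  have : Fact (1 < N) := ⟨by omega⟩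
  have hsucc : (t + 1).val = (t.val + 1) % N := by rw [ZMod.val_add, ZMod.val_one]
  show R.Adj (g t.val) (g (t + 1).val)
  obtain hlt | hlast : t.val + 1 < N ∨ t.val + 1 = N := by have := t.val_lt; omega
  · rw [hsucc, Nat.mod_eq_of_lt hlt]
    exact hadj _ hlt
  · rw [hsucc, hlast, Nat.mod_self, show t.val = N - 1 by omega]
    exact hclose

variable {m : ℕ} {f : ZMod m → V} {u v : V}

/-- Going once around the cycle from `f (i + 1)` to `f i`, then along `q`. -/
def detour (f : ZMod m → V) (i : ZMod m) (q : R.Walk u v) (n : ℕ) : V :=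
  if n < m then f (i + 1 + n) else q.getVert (n - m)

theorem detour_injOn (hf : Function.Injective f) (i : ZMod m) {q : R.Walk u v} (hq : q.IsPath)
    (hqf : ∀ x ∈ q.support, x ∉ Set.range f) :
    Set.InjOn (detour f i q) (Set.Iio (m + q.length + 1)) := by
  intro a ha b hb hab
  simp only [Set.mem_Iio] at ha hb
  unfold detour at hab
  split_ifs at hab with ham hbm hbm
  · have := (ZMod.natCast_eq_natCast_iff' a b m).mp (add_left_cancel (hf hab))
    rwa [Nat.mod_eq_of_lt ham, Nat.mod_eq_of_lt hbm] at this
  · exact absurd ⟨_, hab⟩ (hqf _ (q.getVert_mem_support _))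
  · exact absurd ⟨_, hab.symm⟩ (hqf _ (q.getVert_mem_support _))
  · have := hq.getVert_injOn (by simp only [Set.mem_ofPred_eq]; omega)
      (by simp only [Set.mem_ofPred_eq]; omega) hab
    omega

theorem detour_adj (hf : CycleIn R m f) {i : ZMod m} {q : R.Walk u v} (hu : R.Adj (f i) u)
    {n : ℕ} (hn : n + 1 < m + q.length + 1) :
    R.Adj (detour f i q n) (detour f i q (n + 1)) := by
  unfold detour
  rcases lt_trichotomy (n + 1) m with hlt | heq | hgt
  · rw [if_pos (by omega), if_pos hlt, Nat.cast_succ, ← add_assoc]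
    exact hf.2.2 _
  · have hlast : ((n : ℕ) : ZMod m) = -1 := by
      rw [eq_neg_iff_add_eq_zero, ← Nat.cast_add_one, heq, ZMod.natCast_self]
    rw [if_pos (by omega), if_neg (by omega), hlast, add_neg_cancel_right, heq, Nat.sub_self,
      SimpleGraph.Walk.getVert_zero]
    exact hu
  · rw [if_neg (by omega), if_neg (by omega), show n + 1 - m = n - m + 1 by omega]
    exact q.adj_getVert_succ (by omega)

theorem detour_cycleIn (hf : CycleIn R m f) {i : ZMod m} {q : R.Walk u v} (hq : q.IsPath)
    (hqf : ∀ x ∈ q.support, x ∉ Set.range f) (hu : R.Adj (f i) u) (hv : R.Adj v (f (i + 1))) :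
    CycleIn R (m + q.length + 1) fun t => detour f i q t.val := by
  refine of_injOn_of_adj (by linarith [hf.1]) (detour_injOn hf.2.1 i hq hqf)
    (fun n hn => detour_adj hf hu hn) ?_
  unfold detour
  rw [if_neg (by omega), if_pos (by linarith [hf.1]), Nat.add_sub_cancel, Nat.add_sub_cancel_left,
    q.getVert_length, Nat.cast_zero, add_zero]
  exact hv

end CycleIn

theorem LongestCycle.not_adj_succ_of_walk {V : Type*} {R : SimpleGraph V} {m : ℕ}
    {f : ZMod m → V} (h : LongestCycle R m f) {u v : V} (p : R.Walk u v)
    (hp : ∀ x ∈ p.support, x ∉ Set.range f) {i : ZMod m} (hu : R.Adj u (f i)) :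
    ¬ R.Adj v (f (i + 1)) := by
  classical
  intro hv
  have := h.2 _ _ (h.1.detour_cycleIn p.toPath.2
    (fun x hx => hp x (p.support_toPath_subset_support hx)) hu.symm hv)
  omega

theorem Finset.card_le_two_mul_card_of_mapsTo_compl {α : Type*} [Fintype α] [DecidableEq α]
    {s : Finset α} {e : α → α} (he : Function.Injective e) (hs : ∀ a ∉ s, e a ∈ s) :
    Fintype.card α ≤ 2 * s.card := by
  have : sᶜ.card ≤ s.card :=
    card_le_card_of_injOn e (fun a ha => hs a (mem_compl.mp ha)) he.injOn
  rw [card_compl] at this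
  have := card_le_univ s
  omega

theorem common_nonneighbors_on_cycle_general {V : Type*} (R : SimpleGraph V)
    [DecidableRel R.Adj] (m : ℕ) [NeZero m] (f : ZMod m → V)
    (h : LongestCycle R m f) (Δ : ℕ)
    (w : Fin Δ → V)
    (hconn : ∀ j j', ∃ p : R.Walk (w j) (w j'), ∀ x ∈ p.support, x ∉ Set.range f) :
    ((m : ℝ) - (Δ : ℝ) ^ 2) / 2
      ≤ ((Finset.univ.filter fun i : ZMod m => ∀ j, ¬ R.Adj (w j) (f i)).card : ℝ) := by
  set S := Finset.univ.filter fun i : ZMod m => ∀ j, ¬ R.Adj (w j) (f i)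
  have hsucc : ∀ i ∉ S, i + 1 ∈ S := by
    intro i hi
    simp only [S, mem_filter, mem_univ, true_and, not_forall, not_not] at hi ⊢
    obtain ⟨j, hj⟩ := hi
    intro j'
    obtain ⟨p, hp⟩ := hconn j j'
    exact h.not_adj_succ_of_walk p hp hj
  have hm : m ≤ 2 * S.card := by
    simpa only [ZMod.card] using card_le_two_mul_card_of_mapsTo_compl (add_left_injective 1) hsucc
  have : (m : ℝ) ≤ 2 * S.card := by exact_mod_cast hm
  linarith [sq_nonneg (Δ : ℝ)]

theorem common_nonneighbors_on_cycle {V : Type*} (R : SimpleGraph V)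
    [DecidableRel R.Adj] (m : ℕ) [NeZero m] (f : ZMod m → V)
    (h : LongestCycle R m f) (Δ : ℕ) (hΔ : 1 ≤ Δ)
    (w : Fin Δ → V) (hw : ∀ j, w j ∉ Set.range f)
    (hconn : ∀ j j', ∃ p : R.Walk (w j) (w j'), ∀ x ∈ p.support, x ∉ Set.range f) :
    ((m : ℝ) - (Δ : ℝ) ^ 2) / 2
      ≤ ((Finset.univ.filter fun i : ZMod m => ∀ j, ¬ R.Adj (w j) (f i)).card : ℝ) :=
  common_nonneighbors_on_cycle_general R m f h Δ w hconn
end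

section
/- Let C and C' be two vertex-disjoint cycles in a graph R with |C| ≥ |C'|, such that C is a longest cycle in R. Let S be a set of consecutive vertices of C and T a set of consecutive vertices of C' with |S|, |T| ≤ ⌈|C'|/2⌉. Then there do not exist two vertex-disjoint edges of R between S and T. -/
/-!
Take the two edges `f x — g y` and `f (x + d) — g (y + e)` with `0 < d` and `0 < e`. Walking
along `C` from `f (x + d)` the long way round to `f x`, crossing to `g y`, walking along `C'`
the long way round to `g (y + e)` and crossing back gives a cycle with
`(m - d + 1) + (m' - e + 1)` vertices. This exceeds `m` as soon as `d + e ≤ m' + 1`, which holds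
when both endpoints on each cycle lie in a segment of at most `⌈m'/2⌉` vertices.
-/

open SimpleGraph Finset

def IsIndexedPath {V : Type*} (R : SimpleGraph V) (n : ℕ) (P : ℕ → V) : Prop :=
  Set.InjOn P (Set.Iic n) ∧ ∀ i < n, R.Adj (P i) (P (i + 1))

namespace IsIndexedPath

variable {V : Type*} {R : SimpleGraph V}

theorem append {p q : ℕ} {P Q : ℕ → V} (hP : IsIndexedPath R p P) (hQ : IsIndexedPath R q Q)
    (hPQ : ∀ i ≤ p, ∀ j ≤ q, P i ≠ Q j) (hlink : R.Adj (P p) (Q 0)) :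
    IsIndexedPath R (p + q + 1) (fun k => if k ≤ p then P k else Q (k - (p + 1))) := by
  refine ⟨fun k hk l hl hkl => ?_, fun k hk => ?_⟩
  · simp only [Set.mem_Iic] at hk hl
    by_cases hkp : k ≤ p <;> by_cases hlp : l ≤ p <;> simp only [hkp, hlp, if_true, if_false] at hkl
    · exact hP.1 hkp hlp hkl
    · exact absurd hkl (hPQ _ hkp _ (by omega))
    · exact absurd hkl.symm (hPQ _ hlp _ (by omega))
    · have := hQ.1 (by simp only [Set.mem_Iic]; omega) (by simp only [Set.mem_Iic]; omega) hkl
      omega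
  · rcases lt_trichotomy k p with hkp | rfl | hkp
    · simpa [hkp.le, Nat.succ_le_of_lt hkp] using hP.2 k hkp
    · simpa using hlink
    · have hQk := hQ.2 (k - (p + 1)) (by omega)
      rw [show k - (p + 1) + 1 = k + 1 - (p + 1) by omega] at hQk
      simpa [show ¬ k ≤ p by omega, show ¬ k + 1 ≤ p by omega] using hQk

theorem cycleIn {n : ℕ} {W : ℕ → V} (hW : IsIndexedPath R n W) (hn : 2 ≤ n)
    (hclose : R.Adj (W n) (W 0)) : CycleIn R (n + 1) (fun k => W k.val) := by
  refine ⟨by omega, fun k l hkl => ZMod.val_injective _ ?_, fun k => ?_⟩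
  · exact hW.1 (Nat.lt_succ_iff.mp (ZMod.val_lt k)) (Nat.lt_succ_iff.mp (ZMod.val_lt l)) hkl
  · have hk : k + 1 = ((k.val + 1 : ℕ) : ZMod (n + 1)) := by simp
    dsimp only
    rcases (Nat.lt_succ_iff.mp (ZMod.val_lt k)).lt_or_eq with hlt | heq
    · rw [hk, ZMod.val_cast_of_lt (by omega)]
      exact hW.2 _ hlt
    · rw [hk, heq, ZMod.natCast_self, ZMod.val_zero]
      exact heq ▸ hclose

end IsIndexedPath

namespace CycleIn

variable {V : Type*} {R : SimpleGraph V} {m : ℕ} {f : ZMod m → V}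

theorem comp_neg (hf : CycleIn R m f) : CycleIn R m (fun i => f (-i)) :=
  ⟨hf.1, hf.2.1.comp neg_injective, fun i => by
    show R.Adj (f (-i)) (f (-(i + 1)))
    rw [show -(i + 1) = -i - 1 by ring]
    simpa using (hf.2.2 (-i - 1)).symm⟩

theorem isIndexedPath_arc (hf : CycleIn R m f) (x : ZMod m) {n : ℕ} (hn : n < m) :
    IsIndexedPath R n (fun k => f (x + k)) := by
  refine ⟨fun k hk l hl hkl => ?_, fun k _ => by simpa [add_assoc] using hf.2.2 (x + k)⟩
  have hmod := (ZMod.natCast_eq_natCast_iff' k l m).mp (add_left_cancel (hf.2.1 hkl))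
  rwa [Nat.mod_eq_of_lt (by simp only [Set.mem_Iic] at hk; omega),
    Nat.mod_eq_of_lt (by simp only [Set.mem_Iic] at hl; omega)] at hmod

end CycleIn

theorem LongestCycle.not_adj_of_adj {V : Type*} {R : SimpleGraph V} {m m' : ℕ}
    {f : ZMod m → V} {g : ZMod m' → V} (hf : LongestCycle R m f) (hg : CycleIn R m' g)
    (hdisj : ∀ i j, f i ≠ g j) {x : ZMod m} {y : ZMod m'} {d e : ℕ} (hd : 0 < d) (he : 0 < e)
    (hde : d + e ≤ m' + 1) (hxy : R.Adj (f x) (g y)) : ¬ R.Adj (f (x + d)) (g (y + e)) := by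
  intro hxy'
  have hm' : m' ≤ m := hf.2 m' g hg
  have hm : 3 ≤ m := hf.1.1
  have hP := hf.1.isIndexedPath_arc (x + d) (n := m - d) (by omega)
  have hQ := hg.comp_neg.isIndexedPath_arc (-y) (n := m' - e) (by omega)
  have hPend : f (x + d + ((m - d : ℕ) : ZMod m)) = f x := by
    rw [Nat.cast_sub (by omega), ZMod.natCast_self]; ring_nf
  have hQend : g (-((m' - e : ℕ) : ZMod m') + y) = g (y + e) := by
    rw [Nat.cast_sub (by omega), ZMod.natCast_self]; ring_nf
  have hC := (hP.append hQ (fun i _ j _ => hdisj _ _) (by simpa [hPend] using hxy)).cycleIn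
    (by omega) (by simpa [hQend] using hxy'.symm)
  have := hf.2 _ _ hC
  omega

theorem no_two_independent_edges_between_segments_general {V : Type*} (R : SimpleGraph V)
    (m m' : ℕ) (f : ZMod m → V) (g : ZMod m' → V)
    (hf : LongestCycle R m f) (hg : CycleIn R m' g)
    (hdisj : ∀ i j, f i ≠ g j)
    (a : ZMod m) (b : ZMod m') (s t : ℕ)
    (hs : s ≤ (m' + 1) / 2) (ht : t ≤ (m' + 1) / 2) :
    ¬ ∃ (i₁ i₂ j₁ j₂ : ℕ), i₁ < s ∧ i₂ < s ∧ j₁ < t ∧ j₂ < t ∧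
        R.Adj (f (a + (i₁ : ZMod m))) (g (b + (j₁ : ZMod m'))) ∧
        R.Adj (f (a + (i₂ : ZMod m))) (g (b + (j₂ : ZMod m'))) ∧
        f (a + (i₁ : ZMod m)) ≠ f (a + (i₂ : ZMod m)) ∧
        g (b + (j₁ : ZMod m')) ≠ g (b + (j₂ : ZMod m')) := by
  rintro ⟨i₁, i₂, j₁, j₂, hi₁, hi₂, hj₁, hj₂, E₁, E₂, hfne, hgne⟩
  wlog hi : i₁ < i₂ generalizing i₁ i₂ j₁ j₂
  · have hi' : i₂ < i₁ := lt_of_le_of_ne (not_lt.mp hi) (by rintro rfl; exact hfne rfl)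
    exact this i₂ i₁ j₂ j₁ hi₂ hi₁ hj₂ hj₁ E₂ E₁ hfne.symm hgne.symm hi'
  have hshift : ∀ {n : ℕ} (c : ZMod n) {k l : ℕ}, l ≤ k → c + k = c + l + ((k - l : ℕ) : ZMod n) :=
    fun c k l hlk => by push_cast [Nat.cast_sub hlk]; ring
  rw [hshift a hi.le] at E₂
  rcases lt_or_gt_of_ne (fun h : j₁ = j₂ => hgne (h ▸ rfl)) with hj | hj
  · rw [hshift b hj.le] at E₂
    exact hf.not_adj_of_adj hg hdisj (by omega) (by omega) (by omega) E₁ E₂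
  · have hrev : b + j₂ = -(-(b + j₁) + ((j₁ - j₂ : ℕ) : ZMod m')) := by
      rw [hshift b hj.le]; ring
    rw [hrev] at E₂
    exact hf.not_adj_of_adj hg.comp_neg (fun i j => hdisj i (-j)) (by omega) (by omega) (by omega)
      (by simpa using E₁) E₂

theorem no_two_independent_edges_between_segments {V : Type*} (R : SimpleGraph V)
    (m m' : ℕ) (f : ZMod m → V) (g : ZMod m' → V)
    (hf : LongestCycle R m f) (hg : CycleIn R m' g) (hmm : m' ≤ m)
    (hdisj : ∀ i j, f i ≠ g j)
    (a : ZMod m) (b : ZMod m') (s t : ℕ)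
    (hs : s ≤ (m' + 1) / 2) (ht : t ≤ (m' + 1) / 2) :
    ¬ ∃ (i₁ i₂ j₁ j₂ : ℕ), i₁ < s ∧ i₂ < s ∧ j₁ < t ∧ j₂ < t ∧
        R.Adj (f (a + (i₁ : ZMod m))) (g (b + (j₁ : ZMod m'))) ∧
        R.Adj (f (a + (i₂ : ZMod m))) (g (b + (j₂ : ZMod m'))) ∧
        f (a + (i₁ : ZMod m)) ≠ f (a + (i₂ : ZMod m)) ∧
        g (b + (j₁ : ZMod m')) ≠ g (b + (j₂ : ZMod m')) :=
  no_two_independent_edges_between_segments_general R m m' f g hf hg hdisj a b s t hs ht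
end
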